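/- arXiv:2112.12317 — 3 statements merged into one kernel-verified Lean document; each statement's English description precedes it below -/
import Mathlib

section
/- Fix κ > 2, ν ≥ 0, and consider the parametric family φ_θ(t) = σ² φ_{ν,κ}(t/β) for θ = (σ², β) ∈ [σ²_min, σ²_max] × [β_min, β_max] with 0 < σ²_min, 0 < β_min. Then the partial derivative ∂φ_θ/∂β exists for all t ≥ 0 and is given by ∂φ_θ/∂β(t) = (2 t² (κ−1) / β³) · (B(2(κ−1),ν+1)/B(2κ,ν+1)) · σ² φ_{ν,κ−1}(t/β), and it is uniformly bounded: |∂φ_θ/∂β(t)| ≤ (2(κ−1)/β_min) · (B(2(κ−1),ν+1)/B(2κ,ν+1)) · σ²_max for all t ≥ 0 and all θ in the parameter set, and it vanishes for t ≥ β. -/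
open scoped Real

/-- The real Beta function, as an integral. -/
noncomputable def Beta (a b : ℝ) : ℝ :=
  ∫ t in (0:ℝ)..1, t ^ (a - 1) * (1 - t) ^ (b - 1)

/-- The generalized Wendland function with smoothness parameters ν and κ. -/
noncomputable def genWendland (ν κ : ℝ) (r : ℝ) : ℝ :=
  if r < 1 then
    (1 / Beta (2*κ) (ν + 1)) * ∫ u in r..1, u * (u^2 - r^2) ^ (κ - 1) * (1 - u) ^ ν
  else 0

/-!
Writing `(u² - r²)^(κ-1)` as `max (u² - r²) 0 ^ (κ-1)` extends the integrand of `φ_{ν,κ}(r)`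
by zero to the fixed interval `[0, 1]`; for `κ - 1 > 1` this integrand is `C¹` in `r`, and
differentiating under the integral sign gives
`φ_{ν,κ}'(r) = -2r(κ-1) (B(2(κ-1),ν+1)/B(2κ,ν+1)) φ_{ν,κ-1}(r)`. The chain rule through
`r = t/β` gives the formula. For the bound, the integrand is dominated by the Beta integrand
`u^(2κ-1) (1-u)^ν`, so `0 ≤ φ_{ν,κ-1} ≤ 1`, and `φ_{ν,κ-1}(t/β)` vanishes unless `t/β < 1`.
-/

open Set Filter Topology

theorem Beta_pos {a b : ℝ} (ha : 1 ≤ a) (hb : 1 ≤ b) : 0 < Beta a b := by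
  refine intervalIntegral.intervalIntegral_pos_of_pos_on ?_ (fun x hx => ?_) zero_lt_one
  · exact (((Real.continuous_rpow_const (by linarith)).mul ((Real.continuous_rpow_const
      (by linarith)).comp (continuous_const.sub continuous_id)))).intervalIntegrable 0 1
  · exact mul_pos (Real.rpow_pos_of_pos hx.1 _) (Real.rpow_pos_of_pos (by linarith [hx.2]) _)

theorem hasDerivAt_max_zero_rpow {c : ℝ} (hc : 1 < c) (y : ℝ) :
    HasDerivAt (fun z : ℝ => max z 0 ^ c) (c * max y 0 ^ (c - 1)) y := by
  have hc0 : c ≠ 0 := by positivity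
  rcases lt_trichotomy y 0 with hy | rfl | hy
  · rw [max_eq_right hy.le, Real.zero_rpow (by linarith), mul_zero]
    refine (hasDerivAt_const y (0 : ℝ)).congr_of_eventuallyEq ?_
    filter_upwards [Iio_mem_nhds hy] with z hz
    rw [max_eq_right hz.le, Real.zero_rpow hc0]
  · rw [max_self, Real.zero_rpow (by linarith), mul_zero]
    have hright : HasDerivWithinAt (fun z : ℝ => max z 0 ^ c) 0 (Ici 0) 0 := by
      have h := (Real.hasDerivAt_rpow_const (x := 0) (Or.inr hc.le)).hasDerivWithinAt (s := Ici 0)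
      rw [Real.zero_rpow (by linarith), mul_zero] at h
      exact h.congr (fun z (hz : 0 ≤ z) => by simp only [max_eq_left hz]) (by simp only [max_self])
    have hleft : HasDerivWithinAt (fun z : ℝ => max z 0 ^ c) 0 (Iic 0) 0 :=
      (hasDerivWithinAt_const 0 (Iic 0) (0 : ℝ)).congr
        (fun z (hz : z ≤ 0) => by simp only [max_eq_right hz, Real.zero_rpow hc0])
        (by simp only [max_self, Real.zero_rpow hc0])
    simpa only [Iic_union_Ici, hasDerivWithinAt_univ] using hleft.union hright
  · rw [max_eq_left hy.le]
    refine (Real.hasDerivAt_rpow_const (Or.inl hy.ne')).congr_of_eventuallyEq ?_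
    filter_upwards [Ioi_mem_nhds hy] with z hz
    rw [max_eq_left hz.le]

noncomputable def wendlandIntegrand (ν c r u : ℝ) : ℝ :=
  u * max (u ^ 2 - r ^ 2) 0 ^ c * (1 - u) ^ ν

noncomputable def wendlandIntegral (ν c r : ℝ) : ℝ :=
  ∫ u in (0:ℝ)..1, wendlandIntegrand ν c r u

section wendlandIntegrand

variable {ν c r u : ℝ}

theorem continuous_wendlandIntegrand (hc : 0 ≤ c) (hν : 0 ≤ ν) (r : ℝ) :
    Continuous (wendlandIntegrand ν c r) :=
  (continuous_id.mul ((Real.continuous_rpow_const hc).comp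
    (((continuous_pow 2).sub continuous_const).max continuous_const))).mul
    ((Real.continuous_rpow_const hν).comp (continuous_const.sub continuous_id))

theorem wendlandIntegrand_nonneg (hu₀ : 0 ≤ u) (hu₁ : u ≤ 1) : 0 ≤ wendlandIntegrand ν c r u :=
  mul_nonneg (mul_nonneg hu₀ (Real.rpow_nonneg (le_max_right _ _) _))
    (Real.rpow_nonneg (by linarith) _)

theorem wendlandIntegrand_eq_zero (hc : c ≠ 0) (hu : u ^ 2 ≤ r ^ 2) :
    wendlandIntegrand ν c r u = 0 := by
  rw [wendlandIntegrand, max_eq_right (by linarith), Real.zero_rpow hc, mul_zero, zero_mul]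

theorem wendlandIntegrand_le (hc : 0 ≤ c) (hu₀ : 0 ≤ u) (hu₁ : u ≤ 1) :
    wendlandIntegrand ν c r u ≤ u ^ (2 * c + 1) * (1 - u) ^ ν := by
  have hpow : max (u ^ 2 - r ^ 2) 0 ^ c ≤ (u ^ 2) ^ c :=
    Real.rpow_le_rpow (le_max_right _ _) (max_le (by nlinarith) (sq_nonneg u)) hc
  have hsplit : u ^ (2 * c + 1) = u * (u ^ 2) ^ c := by
    rw [Real.rpow_add_one' hu₀ (by positivity), ← Real.rpow_natCast_mul hu₀, mul_comm]
    norm_num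
  rw [wendlandIntegrand, hsplit]
  gcongr

theorem wendlandIntegrand_le_one (hc : 0 ≤ c) (hν : 0 ≤ ν) (hu₀ : 0 ≤ u) (hu₁ : u ≤ 1) :
    wendlandIntegrand ν c r u ≤ 1 :=
  (wendlandIntegrand_le hc hu₀ hu₁).trans (mul_le_one₀
    (Real.rpow_le_one hu₀ hu₁ (by positivity)) (Real.rpow_nonneg (by linarith) _)
    (Real.rpow_le_one (by linarith) (by linarith) hν))

theorem hasDerivAt_wendlandIntegrand (hc : 1 < c) (ν u r : ℝ) :
    HasDerivAt (fun r => wendlandIntegrand ν c r u)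
      (-2 * r * c * wendlandIntegrand ν (c - 1) r u) r := by
  have hinner : HasDerivAt (fun r : ℝ => u ^ 2 - r ^ 2) (-2 * r) r := by
    simpa using (hasDerivAt_pow 2 r).const_sub (u ^ 2)
  refine ((((hasDerivAt_max_zero_rpow hc _).comp r hinner).const_mul u).mul_const
    ((1 - u) ^ ν)).congr_deriv ?_
  simp only [wendlandIntegrand]
  ring

end wendlandIntegrand

section wendlandIntegral

variable {ν c : ℝ}

theorem integral_wendlandIntegrand_eq_zero (hc : c ≠ 0) {a r : ℝ} (ha : 0 ≤ a) (har : a ≤ r) :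
    ∫ u in (0:ℝ)..a, wendlandIntegrand ν c r u = 0 := by
  rw [intervalIntegral.integral_congr (g := fun _ => 0), intervalIntegral.integral_zero]
  intro u hu
  rw [uIcc_of_le ha] at hu
  exact wendlandIntegrand_eq_zero hc (pow_le_pow_left₀ hu.1 (hu.2.trans har) 2)

theorem wendlandIntegral_nonneg (r : ℝ) : 0 ≤ wendlandIntegral ν c r :=
  intervalIntegral.integral_nonneg zero_le_one fun _ hu => wendlandIntegrand_nonneg hu.1 hu.2

theorem wendlandIntegral_le_Beta (hc : 0 ≤ c) (hν : 0 ≤ ν) (r : ℝ) :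
    wendlandIntegral ν c r ≤ Beta (2 * (c + 1)) (ν + 1) := by
  have hBeta : Beta (2 * (c + 1)) (ν + 1) = ∫ u in (0:ℝ)..1, u ^ (2 * c + 1) * (1 - u) ^ ν := by
    rw [Beta, add_sub_cancel_right]
    ring_nf
  rw [hBeta]
  refine intervalIntegral.integral_mono_on zero_le_one
    ((continuous_wendlandIntegrand hc hν r).intervalIntegrable 0 1) ?_
    fun u hu => wendlandIntegrand_le hc hu.1 hu.2
  exact ((Real.continuous_rpow_const (by positivity)).mul ((Real.continuous_rpow_const hν).comp
    (continuous_const.sub continuous_id))).intervalIntegrable 0 1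

theorem hasDerivAt_wendlandIntegral (hc : 1 < c) (hν : 0 ≤ ν) (r₀ : ℝ) :
    HasDerivAt (wendlandIntegral ν c) (-2 * r₀ * c * wendlandIntegral ν (c - 1) r₀) r₀ := by
  have hcont : ∀ c', 0 ≤ c' → ∀ r, Continuous (wendlandIntegrand ν c' r) :=
    fun c' hc' => continuous_wendlandIntegrand hc' hν
  have key := intervalIntegral.hasDerivAt_integral_of_dominated_loc_of_deriv_le
    (μ := MeasureTheory.volume) (F := fun r u => wendlandIntegrand ν c r u)
    (F' := fun r u => -2 * r * c * wendlandIntegrand ν (c - 1) r u)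
    (bound := fun _ => 2 * (|r₀| + 1) * c) (Metric.ball_mem_nhds r₀ one_pos)
    (Eventually.of_forall fun r => (hcont c (by linarith) r).aestronglyMeasurable)
    ((hcont c (by linarith) r₀).intervalIntegrable 0 1)
    ((continuous_const.mul (hcont _ (by linarith) r₀)).aestronglyMeasurable)
    ?bound (continuous_const.intervalIntegrable 0 1)
    (MeasureTheory.ae_of_all _ fun u _ r _ => hasDerivAt_wendlandIntegrand hc ν u r)
  case bound =>
    refine MeasureTheory.ae_of_all _ fun u hu r hr => ?_
    rw [uIoc_of_le zero_le_one] at hu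
    have hr' : |r| ≤ |r₀| + 1 := by
      have := abs_sub_abs_le_abs_sub r r₀
      rw [Metric.mem_ball, Real.dist_eq] at hr
      linarith
    have h₀ := wendlandIntegrand_nonneg (ν := ν) (c := c - 1) (r := r) hu.1.le hu.2
    have h₁ := wendlandIntegrand_le_one (r := r) (by linarith : 0 ≤ c - 1) hν hu.1.le hu.2
    have hc₀ : 0 ≤ 2 * |r| * c := mul_nonneg (by positivity) (by linarith)
    simp only [norm_mul, norm_neg, Real.norm_ofNat, Real.norm_eq_abs, abs_of_nonneg h₀,
      abs_of_pos (by linarith : (0:ℝ) < c)]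
    nlinarith [mul_le_mul_of_nonneg_left h₁ hc₀]
  have hderiv := key.2
  rw [intervalIntegral.integral_const_mul] at hderiv
  exact hderiv

end wendlandIntegral

section genWendland

variable {ν κ r : ℝ}

theorem genWendland_of_one_le (hr : 1 ≤ r) : genWendland ν κ r = 0 :=
  if_neg hr.not_gt

theorem genWendland_eq_wendlandIntegral (hκ : 1 < κ) (hν : 0 ≤ ν) (hr : 0 ≤ r) :
    genWendland ν κ r = 1 / Beta (2 * κ) (ν + 1) * wendlandIntegral ν (κ - 1) r := by
  have hκ₀ : κ - 1 ≠ 0 := by linarith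
  have hint := fun a b => (continuous_wendlandIntegrand (by linarith : 0 ≤ κ - 1) hν r
    ).intervalIntegrable (μ := MeasureTheory.volume) a b
  rcases lt_or_ge r 1 with hr₁ | hr₁
  · rw [genWendland, if_pos hr₁, wendlandIntegral,
      ← intervalIntegral.integral_add_adjacent_intervals (hint 0 r) (hint r 1),
      integral_wendlandIntegrand_eq_zero hκ₀ hr le_rfl, zero_add]
    congr 1
    refine intervalIntegral.integral_congr fun u hu => ?_
    rw [uIcc_of_le hr₁.le] at hu
    simp only [wendlandIntegrand, max_eq_left (by nlinarith [hu.1] : 0 ≤ u ^ 2 - r ^ 2)]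
  · rw [genWendland_of_one_le hr₁, wendlandIntegral,
      integral_wendlandIntegrand_eq_zero hκ₀ zero_le_one hr₁, mul_zero]

theorem genWendland_nonneg (hκ : 1 < κ) (hν : 0 ≤ ν) (hr : 0 ≤ r) : 0 ≤ genWendland ν κ r := by
  rw [genWendland_eq_wendlandIntegral hκ hν hr]
  exact mul_nonneg (one_div_nonneg.2 (Beta_pos (by linarith) (by linarith)).le)
    (wendlandIntegral_nonneg r)

theorem genWendland_le_one (hκ : 1 < κ) (hν : 0 ≤ ν) (hr : 0 ≤ r) : genWendland ν κ r ≤ 1 := by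
  have hle := wendlandIntegral_le_Beta (by linarith : 0 ≤ κ - 1) hν r
  rw [sub_add_cancel] at hle
  rw [genWendland_eq_wendlandIntegral hκ hν hr, one_div, inv_mul_le_iff₀
    (Beta_pos (by linarith) (by linarith)), mul_one]
  exact hle

theorem sq_mul_genWendland_le_one (hκ : 1 < κ) (hν : 0 ≤ ν) (hr : 0 ≤ r) :
    r ^ 2 * genWendland ν κ r ≤ 1 := by
  rcases lt_or_ge r 1 with hr₁ | hr₁
  · exact mul_le_one₀ (pow_le_one₀ hr hr₁.le) (genWendland_nonneg hκ hν hr)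
      (genWendland_le_one hκ hν hr)
  · rw [genWendland_of_one_le hr₁, mul_zero]
    exact zero_le_one

theorem hasDerivAt_genWendland (hκ : 2 < κ) (hν : 0 ≤ ν) (hr : 0 < r) :
    HasDerivAt (genWendland ν κ)
      (-2 * r * (κ - 1) * (Beta (2 * (κ - 1)) (ν + 1) / Beta (2 * κ) (ν + 1)) *
        genWendland ν (κ - 1) r) r := by
  have hB : Beta (2 * (κ - 1)) (ν + 1) ≠ 0 := (Beta_pos (by linarith) (by linarith)).ne'
  have hderiv := (hasDerivAt_wendlandIntegral (by linarith : 1 < κ - 1) hν r).const_mul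
    (1 / Beta (2 * κ) (ν + 1))
  rw [genWendland_eq_wendlandIntegral (by linarith) hν hr.le]
  refine (hderiv.congr_of_eventuallyEq ?_).congr_deriv ?_
  · filter_upwards [Ioi_mem_nhds hr] with s hs
    exact genWendland_eq_wendlandIntegral (by linarith) hν hs.le
  · field_simp

theorem hasDerivAt_genWendland_div (hκ : 2 < κ) (hν : 0 ≤ ν) {t β : ℝ} (ht : 0 ≤ t)
    (hβ : 0 < β) :
    HasDerivAt (fun b => genWendland ν κ (t / b))
      (2 * t ^ 2 * (κ - 1) / β ^ 3 * (Beta (2 * (κ - 1)) (ν + 1) / Beta (2 * κ) (ν + 1)) *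
        genWendland ν (κ - 1) (t / β)) β := by
  rcases ht.eq_or_lt with rfl | ht₀
  · simpa using hasDerivAt_const β (genWendland ν κ 0)
  have hdiv : HasDerivAt (fun b => t / b) (-t / β ^ 2) β := by
    simpa [div_eq_mul_inv, neg_div] using (hasDerivAt_inv hβ.ne').const_mul t
  refine ((hasDerivAt_genWendland hκ hν (div_pos ht₀ hβ)).comp β hdiv).congr_deriv ?_
  field_simp

end genWendland

theorem genWendland_deriv_beta_general (ν κ : ℝ) (hκ : 2 < κ) (hν : 0 ≤ ν)
    (σmin σmax βmin βmax : ℝ)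
    (hσmin : 0 < σmin) (hβmin : 0 < βmin)
    (t σ2 β : ℝ) (ht : 0 ≤ t)
    (hσ2 : σ2 ∈ Set.Icc σmin σmax) (hβm : β ∈ Set.Icc βmin βmax) :
    HasDerivAt (fun b => σ2 * genWendland ν κ (t / b))
      ((2 * t^2 * (κ - 1) / β^3) * (Beta (2*(κ-1)) (ν + 1) / Beta (2*κ) (ν + 1)) *
        σ2 * genWendland ν (κ - 1) (t / β)) β ∧
    |(2 * t^2 * (κ - 1) / β^3) * (Beta (2*(κ-1)) (ν + 1) / Beta (2*κ) (ν + 1)) *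
        σ2 * genWendland ν (κ - 1) (t / β)| ≤
      (2 * (κ - 1) / βmin) * (Beta (2*(κ-1)) (ν + 1) / Beta (2*κ) (ν + 1)) * σmax ∧
    (β ≤ t →
      (2 * t^2 * (κ - 1) / β^3) * (Beta (2*(κ-1)) (ν + 1) / Beta (2*κ) (ν + 1)) *
        σ2 * genWendland ν (κ - 1) (t / β) = 0) := by
  have hβ : 0 < β := hβmin.trans_le hβm.1
  have hσ2₀ : 0 ≤ σ2 := hσmin.le.trans hσ2.1
  have hr : 0 ≤ t / β := div_nonneg ht hβ.le
  set R := Beta (2*(κ-1)) (ν + 1) / Beta (2*κ) (ν + 1)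
  have hR : 0 ≤ R := div_nonneg (Beta_pos (by linarith) (by linarith)).le
    (Beta_pos (by linarith) (by linarith)).le
  refine ⟨?_, ?_, fun htβ => by rw [genWendland_of_one_le ((one_le_div hβ).2 htβ), mul_zero]⟩
  · exact ((hasDerivAt_genWendland_div hκ hν ht hβ).const_mul σ2).congr_deriv (by ring)
  have hκ₁ : 0 ≤ 2 * (κ - 1) := by linarith
  have hφ₀ := genWendland_nonneg (by linarith : 1 < κ - 1) hν hr
  have hsq := sq_mul_genWendland_le_one (by linarith : 1 < κ - 1) hν hr
  have hD : 2 * t ^ 2 * (κ - 1) / β ^ 3 * R * σ2 * genWendland ν (κ - 1) (t / β)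
      = 2 * (κ - 1) / β * R * σ2 * ((t / β) ^ 2 * genWendland ν (κ - 1) (t / β)) := by
    field_simp
  rw [hD, abs_of_nonneg (by positivity)]
  calc 2 * (κ - 1) / β * R * σ2 * ((t / β) ^ 2 * genWendland ν (κ - 1) (t / β))
      ≤ 2 * (κ - 1) / βmin * R * σmax * 1 := by
        have hσmax : 0 ≤ σmax := hσ2₀.trans hσ2.2
        gcongr
        · exact hβm.1
        · exact hσ2.2
    _ = 2 * (κ - 1) / βmin * R * σmax := mul_one _

/-- For κ > 2, the family `φ_θ(t) = σ² φ_{ν,κ}(t/β)` is differentiable in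
the range parameter β, with derivative
`(2t²(κ-1)/β³)(B(2(κ-1),ν+1)/B(2κ,ν+1)) σ² φ_{ν,κ-1}(t/β)`, which is uniformly bounded
over the parameter set and vanishes for `t ≥ β`. -/
theorem genWendland_deriv_beta (ν κ : ℝ) (hκ : 2 < κ) (hν : 0 ≤ ν)
    (σmin σmax βmin βmax : ℝ)
    (hσmin : 0 < σmin) (hσ : σmin ≤ σmax) (hβmin : 0 < βmin) (hβ : βmin ≤ βmax)
    (t σ2 β : ℝ) (ht : 0 ≤ t)
    (hσ2 : σ2 ∈ Set.Icc σmin σmax) (hβm : β ∈ Set.Icc βmin βmax) :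
    HasDerivAt (fun b => σ2 * genWendland ν κ (t / b))
      ((2 * t^2 * (κ - 1) / β^3) * (Beta (2*(κ-1)) (ν + 1) / Beta (2*κ) (ν + 1)) *
        σ2 * genWendland ν (κ - 1) (t / β)) β ∧
    |(2 * t^2 * (κ - 1) / β^3) * (Beta (2*(κ-1)) (ν + 1) / Beta (2*κ) (ν + 1)) *
        σ2 * genWendland ν (κ - 1) (t / β)| ≤
      (2 * (κ - 1) / βmin) * (Beta (2*(κ-1)) (ν + 1) / Beta (2*κ) (ν + 1)) * σmax ∧
    (β ≤ t →
      (2 * t^2 * (κ - 1) / β^3) * (Beta (2*(κ-1)) (ν + 1) / Beta (2*κ) (ν + 1)) *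
        σ2 * genWendland ν (κ - 1) (t / β) = 0) :=
  genWendland_deriv_beta_general ν κ hκ hν σmin σmax βmin βmax hσmin hβmin t σ2 β ht hσ2 hβm
end

section
/- Let φ : [0, M] → ℝ be continuous and extend it by 0 to [0,∞) (assuming φ(M) = 0). For m ∈ ℕ let b_m → ∞ with b_m = o(m), and define the Chlodovsky–Bernstein approximation B_m(t) = ∑_{k=0}^m φ(b_m k/m · 𝟙[b_m k/m ≤ M]) · C(m,k) (t/b_m)^k (1 − t/b_m)^{m−k} for t ∈ [0, M] (with φ evaluated as 0 outside [0,M]), and B_m(t) = 0 for t > M. Then sup_{t ≥ 0} |B_m(t) − φ(t)| → 0 as m → ∞. -/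
/-!
For `t ≤ M < b_m` the Chlodovsky polynomial is the Bernstein polynomial of `u ↦ φ (b_m u)` at
`t / b_m`. Extended by zero, `φ` is bounded and uniformly continuous on `[0, ∞)`, so for every
`ε > 0` there is `C` with `|φ s - φ t| ≤ ε + C (s - t)²`. Averaging this against the Bernstein
weights, which sum to `1` and have variance `x (1 - x) / m`, gives
`|B_m(t) - φ(t)| ≤ ε + C t b_m / m ≤ ε + C M b_m / m`, and `b_m / m → 0`.
For `t > M` both sides vanish.
-/

open Filter
open scoped BigOperators

/-- The trimmed Chlodovsky–Bernstein polynomial of `φ` on `[0, b]`, set to 0 beyond `M`. -/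
noncomputable def chlodovsky (φ : ℝ → ℝ) (M b : ℝ) (m : ℕ) (t : ℝ) : ℝ :=
  if t ≤ M then
    ∑ k ∈ Finset.range (m + 1),
      φ (b * k / m) * (m.choose k) * (t / b) ^ k * (1 - t / b) ^ (m - k)
  else 0

open Set Finset Polynomial

theorem UniformContinuousOn.exists_dist_le_add_mul_dist_sq {α β : Type*}
    [PseudoMetricSpace α] [PseudoMetricSpace β] {f : α → β} {s : Set α}
    (hf : UniformContinuousOn f s) (hbdd : Bornology.IsBounded (f '' s)) {ε : ℝ} (hε : 0 < ε) :
    ∃ C, 0 ≤ C ∧ ∀ x ∈ s, ∀ y ∈ s, dist (f x) (f y) ≤ ε + C * dist x y ^ 2 := by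
  obtain ⟨δ, hδ, hfδ⟩ := Metric.uniformContinuousOn_iff_le.1 hf ε hε
  obtain ⟨D, hD⟩ := Metric.isBounded_iff.1 hbdd
  refine ⟨max D 0 / δ ^ 2, by positivity, fun x hx y hy => ?_⟩
  rcases le_or_gt (dist x y) δ with hnear | hfar
  · have hfxy := hfδ x hx y hy hnear
    have hpos : 0 ≤ max D 0 / δ ^ 2 * dist x y ^ 2 := by positivity
    linarith
  · have hsq : 1 ≤ dist x y ^ 2 / δ ^ 2 := by
      rw [one_le_div (by positivity)]; gcongr
    calc dist (f x) (f y) ≤ max D 0 :=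
          (hD (mem_image_of_mem f hx) (mem_image_of_mem f hy)).trans (le_max_left _ _)
      _ ≤ max D 0 * (dist x y ^ 2 / δ ^ 2) := le_mul_of_one_le_right (le_max_right _ _) hsq
      _ ≤ ε + max D 0 / δ ^ 2 * dist x y ^ 2 := by rw [mul_div_assoc', div_mul_eq_mul_div]; linarith

section ZeroBeyond

variable {E : Type*} [SeminormedAddCommGroup E] {f : ℝ → E} {a b : ℝ}

theorem uniformContinuousOn_Ici_of_eq_zero_of_lt (hf : ContinuousOn f (Icc a b)) (hfb : f b = 0)
    (hzero : ∀ x, b < x → f x = 0) : UniformContinuousOn f (Ici a) := by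
  have hcont : ContinuousOn f (Icc a (b + 1)) := by
    have hright : ContinuousOn f (Icc b (b + 1)) := continuousOn_const.congr fun x hx =>
      (hx.1.eq_or_lt).elim (fun h => h ▸ hfb) (hzero x)
    refine (hf.union_of_isClosed hright isClosed_Icc isClosed_Icc).mono fun x hx => ?_
    rcases le_or_gt x b with h | h
    exacts [Or.inl ⟨hx.1, h⟩, Or.inr ⟨h.le, hx.2⟩]
  have huc := Metric.uniformContinuousOn_iff_le.1
    (isCompact_Icc.uniformContinuousOn_of_continuous hcont)
  refine Metric.uniformContinuousOn_iff_le.2 fun ε hε => ?_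
  obtain ⟨δ, hδ, hfδ⟩ := huc ε hε
  refine ⟨min δ 1, by positivity, fun x hx y hy hxy => ?_⟩
  -- points at distance at most `1` that are not both in `[a, b + 1]` both lie where `f` vanishes
  by_cases hxy_near : x ≤ b + 1 ∧ y ≤ b + 1
  · exact hfδ x ⟨hx, hxy_near.1⟩ y ⟨hy, hxy_near.2⟩ (hxy.trans (min_le_left _ _))
  · obtain ⟨hxy1, hyx1⟩ := abs_sub_le_iff.1 ((Real.dist_eq x y ▸ hxy).trans (min_le_right _ _))
    obtain ⟨hxb, hyb⟩ : b < x ∧ b < y := by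
      rw [not_and_or, not_le, not_le] at hxy_near
      constructor <;> rcases hxy_near with h | h <;> linarith
    simp [hzero x hxb, hzero y hyb, hε.le]

theorem isBounded_image_Ici_of_eq_zero_of_lt (hf : ContinuousOn f (Icc a b))
    (hzero : ∀ x, b < x → f x = 0) : Bornology.IsBounded (f '' Ici a) := by
  refine ((isCompact_Icc.image_of_continuousOn hf).isBounded.union
    (Bornology.isBounded_singleton (x := 0))).subset ?_
  rintro _ ⟨x, hx, rfl⟩
  rcases le_or_gt x b with h | h
  exacts [Or.inl (mem_image_of_mem f ⟨hx, h⟩), Or.inr (hzero x h)]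

end ZeroBeyond

theorem bernsteinPolynomial_eval_nonneg (m k : ℕ) {x : ℝ} (hx : x ∈ Icc (0 : ℝ) 1) :
    0 ≤ (bernsteinPolynomial ℝ m k).eval x := by
  have hx0 := hx.1
  have hx1 : 0 ≤ 1 - x := sub_nonneg.2 hx.2
  simp only [bernsteinPolynomial, eval_mul, eval_pow, eval_sub, eval_one, eval_X, eval_natCast]
  positivity

theorem sum_bernsteinPolynomial_eval (m : ℕ) (x : ℝ) :
    ∑ k ∈ range (m + 1), (bernsteinPolynomial ℝ m k).eval x = 1 := by
  simpa [eval_finsetSum] using congrArg (eval x) (bernsteinPolynomial.sum ℝ m)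

theorem sum_sq_sub_mul_bernsteinPolynomial_eval {m : ℕ} (hm : m ≠ 0) (x : ℝ) :
    ∑ k ∈ range (m + 1), ((k : ℝ) / m - x) ^ 2 * (bernsteinPolynomial ℝ m k).eval x
      = x * (1 - x) / m := by
  have h := congrArg (eval x) (bernsteinPolynomial.variance ℝ m)
  simp only [eval_finsetSum, eval_mul, eval_pow, eval_sub, eval_X, eval_natCast, eval_one,
    nsmul_eq_mul] at h
  have hm' : (m : ℝ) ≠ 0 := Nat.cast_ne_zero.2 hm
  calc ∑ k ∈ range (m + 1), ((k : ℝ) / m - x) ^ 2 * (bernsteinPolynomial ℝ m k).eval x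
      = (∑ k ∈ range (m + 1), ((m : ℝ) * x - k) ^ 2 * (bernsteinPolynomial ℝ m k).eval x)
          / m ^ 2 := by
        rw [sum_div]
        refine sum_congr rfl fun k _ => ?_
        field_simp
        ring
    _ = x * (1 - x) / m := by
        rw [h]
        field_simp

noncomputable def bernsteinOperator (g : ℝ → ℝ) (m : ℕ) (x : ℝ) : ℝ :=
  ∑ k ∈ range (m + 1), g (k / m) * (bernsteinPolynomial ℝ m k).eval x

theorem abs_bernsteinOperator_sub_le {g : ℝ → ℝ} {m : ℕ} (hm : m ≠ 0) {x ε C : ℝ}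
    (hx : x ∈ Icc (0 : ℝ) 1) (hg : ∀ y ∈ Icc (0 : ℝ) 1, |g y - g x| ≤ ε + C * (y - x) ^ 2) :
    |bernsteinOperator g m x - g x| ≤ ε + C * (x * (1 - x) / m) := by
  set w : ℕ → ℝ := fun k => (bernsteinPolynomial ℝ m k).eval x
  have hnode : ∀ k ∈ range (m + 1), (k : ℝ) / m ∈ Icc (0 : ℝ) 1 := fun k hk =>
    ⟨by positivity, div_le_one_of_le₀ (by exact_mod_cast mem_range_succ_iff.1 hk) (by positivity)⟩
  calc |bernsteinOperator g m x - g x|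
      = |∑ k ∈ range (m + 1), (g (k / m) - g x) * w k| := by
        simp only [bernsteinOperator, sub_mul, sum_sub_distrib, ← mul_sum, w,
          sum_bernsteinPolynomial_eval, mul_one]
    _ ≤ ∑ k ∈ range (m + 1), |g (k / m) - g x| * w k := by
        refine (abs_sum_le_sum_abs _ _).trans_eq (sum_congr rfl fun k _ => ?_)
        rw [abs_mul, abs_of_nonneg (bernsteinPolynomial_eval_nonneg m k hx)]
    _ ≤ ∑ k ∈ range (m + 1), (ε + C * ((k : ℝ) / m - x) ^ 2) * w k :=
        sum_le_sum fun k hk => mul_le_mul_of_nonneg_right (hg _ (hnode k hk))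
          (bernsteinPolynomial_eval_nonneg m k hx)
    _ = ε + C * (x * (1 - x) / m) := by
        simp only [add_mul, sum_add_distrib, ← mul_sum, mul_assoc, w,
          sum_bernsteinPolynomial_eval, sum_sq_sub_mul_bernsteinPolynomial_eval hm, mul_one]

theorem chlodovsky_eq_bernsteinOperator (φ : ℝ → ℝ) {M t : ℝ} (b : ℝ) (m : ℕ) (ht : t ≤ M) :
    chlodovsky φ M b m t = bernsteinOperator (fun u => φ (b * u)) m (t / b) := by
  simp only [chlodovsky, if_pos ht, bernsteinOperator, bernsteinPolynomial, eval_mul, eval_pow,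
    eval_sub, eval_one, eval_X, eval_natCast, mul_div_assoc, mul_assoc]

theorem abs_chlodovsky_sub_le {φ : ℝ → ℝ} {ε C M b t : ℝ} {m : ℕ}
    (hφ : ∀ s ∈ Ici (0 : ℝ), ∀ u ∈ Ici (0 : ℝ), dist (φ s) (φ u) ≤ ε + C * dist s u ^ 2)
    (hC : 0 ≤ C) (hm : m ≠ 0) (hb : 0 < b) (ht : t ∈ Icc 0 M) (htb : t ≤ b) :
    |chlodovsky φ M b m t - φ t| ≤ ε + C * t * (b / m) := by
  set x := t / b with hx_def
  have hx : x ∈ Icc (0 : ℝ) 1 := ⟨div_nonneg ht.1 hb.le, div_le_one_of_le₀ htb hb.le⟩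
  have htx : t = b * x := by rw [hx_def, mul_div_cancel₀ _ hb.ne']
  have hg : ∀ y ∈ Icc (0 : ℝ) 1, |φ (b * y) - φ (b * x)| ≤ ε + C * b ^ 2 * (y - x) ^ 2 := by
    intro y hy
    have := hφ (b * y) (mul_nonneg hb.le hy.1) (b * x) (mul_nonneg hb.le hx.1)
    rwa [Real.dist_eq, Real.dist_eq, sq_abs, ← mul_sub, mul_pow, ← mul_assoc] at this
  rw [chlodovsky_eq_bernsteinOperator φ b m ht.2]
  calc |bernsteinOperator (fun u => φ (b * u)) m x - φ t|
      ≤ ε + C * b ^ 2 * (x * (1 - x) / m) := htx ▸ abs_bernsteinOperator_sub_le hm hx hg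
    _ ≤ ε + C * b ^ 2 * (x / m) := by
        gcongr
        nlinarith [hx.1]
    _ = ε + C * t * (b / m) := by
        rw [htx]; ring

theorem chlodovsky_uniform_convergence_general (M : ℝ) (φ : ℝ → ℝ)
    (hcont : ContinuousOn φ (Set.Icc 0 M)) (hφM : φ M = 0)
    (hout : ∀ t, t ∉ Set.Icc (0:ℝ) M → φ t = 0)
    (b : ℕ → ℝ)
    (hb : Tendsto b atTop atTop)
    (hbo : Tendsto (fun m => b m / m) atTop (nhds 0)) :
    ∀ ε > 0, ∃ N : ℕ, ∀ m ≥ N, ∀ t : ℝ, 0 ≤ t →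
      |chlodovsky φ M (b m) m t - φ t| ≤ ε := by
  intro ε hε
  have hzero : ∀ t, M < t → φ t = 0 := fun t ht => hout t fun h => ht.not_ge h.2
  obtain ⟨C, hC, hφ⟩ := (uniformContinuousOn_Ici_of_eq_zero_of_lt hcont hφM hzero)
    |>.exists_dist_le_add_mul_dist_sq (isBounded_image_Ici_of_eq_zero_of_lt hcont hzero)
      (half_pos hε)
  have hsmall : ∀ᶠ m : ℕ in atTop, C * M * (b m / m) ≤ ε / 2 := by
    have hlim : Tendsto (fun m : ℕ => C * M * (b m / m)) atTop (nhds 0) := by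
      simpa using hbo.const_mul (C * M)
    exact hlim.eventually (ge_mem_nhds (half_pos hε))
  obtain ⟨N, hN⟩ := eventually_atTop.1 <| hsmall.and <| (hb.eventually_gt_atTop M).and <|
    (hb.eventually_gt_atTop 0).and (eventually_ne_atTop 0)
  refine ⟨N, fun m hm t ht => ?_⟩
  obtain ⟨hsmall_m, hMb, hb0, hm0⟩ := hN m hm
  rcases le_or_gt t M with htM | hMt
  · calc |chlodovsky φ M (b m) m t - φ t| ≤ ε / 2 + C * t * (b m / m) :=
          abs_chlodovsky_sub_le hφ hC hm0 hb0 ⟨ht, htM⟩ (htM.trans hMb.le)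
      _ ≤ ε / 2 + C * M * (b m / m) := by gcongr
      _ ≤ ε := by linarith
  · simp [chlodovsky, hMt.not_ge, hzero t hMt, hε.le]

/-- Trimmed Chlodovsky–Bernstein polynomials of a continuous function
vanishing at and beyond `M` converge uniformly on `[0,∞)`, provided `b_m → ∞` and
`b_m = o(m)`. -/
theorem chlodovsky_uniform_convergence (M : ℝ) (hM : 0 < M) (φ : ℝ → ℝ)
    (hcont : ContinuousOn φ (Set.Icc 0 M)) (hφM : φ M = 0)
    (hout : ∀ t, t ∉ Set.Icc (0:ℝ) M → φ t = 0)
    (b : ℕ → ℝ) (hbpos : ∀ m, 0 < b m)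
    (hb : Tendsto b atTop atTop)
    (hbo : Tendsto (fun m => b m / m) atTop (nhds 0)) :
    ∀ ε > 0, ∃ N : ℕ, ∀ m ≥ N, ∀ t : ℝ, 0 ≤ t →
      |chlodovsky φ M (b m) m t - φ t| ≤ ε :=
  chlodovsky_uniform_convergence_general M φ hcont hφM hout b hb hbo
end

section
/- Let Σ and Σ̃ be real symmetric positive-definite n × n matrices and K a real symmetric positive-semidefinite n × n matrix, with ‖K‖₂ ≤ M, λ_min(Σ), λ_min(Σ̃) ≥ m > 0, and ‖Σ‖₂, ‖Σ̃‖₂ ≤ M. Define the scaled Kullback–Leibler-type functional d(Σ) = (1/n) log det(Σ K⁻¹) + (1/n) tr(K Σ⁻¹) − 1 (K additionally assumed positive definite with λ_min(K) ≥ m). Then |d(Σ) − d(Σ̃)| ≤ C(m, M) · ‖Σ − Σ̃‖₂ for a constant C(m,M) depending only on m and M, not on n. -/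
/-- Spectral (operator 2-)norm of a real square matrix. -/
noncomputable def specNorm {n : ℕ} (A : Matrix (Fin n) (Fin n) ℝ) : ℝ :=
  ‖Matrix.toEuclideanCLM (𝕜 := ℝ) A‖

/-!
After the `1 / n` scaling both terms of `d` are Lipschitz in `Σ` with an `n`-independent constant,
because `|tr A| ≤ n ‖A‖`. For the log-determinant, concavity gives
`log det A - log det B ≤ tr (B⁻¹ (A - B))` (apply `log x ≤ x - 1` to the eigenvalues of
`B^{-1/2} A B^{-1/2}`); for the trace term, `Σ⁻¹ - Σ̃⁻¹ = Σ⁻¹ (Σ̃ - Σ) Σ̃⁻¹`. Both are then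
bounded using `‖Σ⁻¹‖ ≤ 1 / m`.
-/

open scoped Matrix.Norms.L2Operator MatrixOrder

lemma specNorm_eq_l2_opNorm {n : ℕ} (A : Matrix (Fin n) (Fin n) ℝ) : specNorm A = ‖A‖ := rfl

lemma abs_one_div_mul_le_of_abs_le_mul {n : ℕ} {x a : ℝ} (ha : 0 ≤ a) (h : |x| ≤ n * a) :
    |1 / (n : ℝ) * x| ≤ a := by
  rcases n.eq_zero_or_pos with rfl | hn
  · simpa using ha
  · rw [abs_mul, abs_of_pos (by positivity), one_div_mul_eq_div, div_le_iff₀ (by positivity)]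
    linarith

namespace Matrix

variable {n : Type*} [Fintype n] [DecidableEq n]

lemma norm_apply_le_l2_opNorm {𝕜 m : Type*} [RCLike 𝕜] [Fintype m]
    (A : Matrix m n 𝕜) (i : m) (j : n) : ‖A i j‖ ≤ ‖A‖ := by
  have h := A.l2_opNorm_mulVec (EuclideanSpace.single j 1)
  rw [PiLp.norm_single, norm_one, mul_one] at h
  refine le_trans (le_of_eq_of_le ?_ (PiLp.norm_apply_le _ i)) h
  simp [EuclideanSpace.single, mulVec_single]

lemma abs_trace_le_card_mul_l2_opNorm (A : Matrix n n ℝ) :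
    |A.trace| ≤ Fintype.card n * ‖A‖ :=
  calc |A.trace| ≤ ∑ i, |A i i| := Finset.abs_sum_le_sum_abs _ _
    _ ≤ ∑ _i : n, ‖A‖ := Finset.sum_le_sum fun i _ => A.norm_apply_le_l2_opNorm i i
    _ = Fintype.card n * ‖A‖ := by simp

lemma inv_sub_inv_of_isUnit {R : Type*} [CommRing R] {A B : Matrix n n R}
    (hA : IsUnit A) (hB : IsUnit B) : A⁻¹ - B⁻¹ = A⁻¹ * (B - A) * B⁻¹ := by
  simp only [nonsing_inv_eq_ringInverse]
  exact Ring.inverse_sub_inverse (iff_of_true hA hB)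

lemma PosDef.l2_opNorm_inv_le {S : Matrix n n ℝ} (hS : S.PosDef) {m : ℝ} (hm : 0 < m)
    (h : ∀ i, m ≤ hS.1.eigenvalues i) : ‖S⁻¹‖ ≤ m⁻¹ := by
  rw [nonsing_inv_eq_ringInverse, ← cfc_ringInverse_id (R := ℝ) S hS.isUnit hS.1]
  refine norm_cfc_le (inv_nonneg.mpr hm.le) fun x hx => ?_
  obtain ⟨i, rfl⟩ := hS.1.spectrum_real_eq_range_eigenvalues ▸ hx
  rw [norm_inv, Real.norm_of_nonneg (hm.le.trans (h i))]
  exact inv_anti₀ hm (h i)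

lemma PosDef.log_det_le_trace_sub_card {P : Matrix n n ℝ} (hP : P.PosDef) :
    Real.log P.det ≤ P.trace - Fintype.card n := by
  rw [hP.1.det_eq_prod_eigenvalues, hP.1.trace_eq_sum_eigenvalues]
  simp only [RCLike.ofReal_real_eq_id, id]
  rw [Real.log_prod fun i _ => (hP.eigenvalues_pos i).ne']
  calc ∑ i, Real.log (hP.1.eigenvalues i) ≤ ∑ i, (hP.1.eigenvalues i - 1) :=
        Finset.sum_le_sum fun i _ => Real.log_le_sub_one_of_pos (hP.eigenvalues_pos i)
    _ = _ := by simp [Finset.sum_sub_distrib]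

lemma PosDef.log_det_sub_log_det_le_trace {A B : Matrix n n ℝ} (hA : A.PosDef) (hB : B.PosDef) :
    Real.log A.det - Real.log B.det ≤ (B⁻¹ * (A - B)).trace := by
  set R := CFC.sqrt B⁻¹
  have hR : R.PosDef := isStrictlyPositive_iff_posDef.mp hB.inv.isStrictlyPositive.sqrt
  have hRR : R * R = B⁻¹ := CFC.sqrt_mul_sqrt_self _ hB.inv.posSemidef.nonneg
  have hP : (R * A * R).PosDef := by
    have h := (IsUnit.posDef_star_left_conjugate_iff hR.isUnit (x := A)).mpr hA
    rwa [star_eq_conjTranspose, hR.1.eq] at h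
  have hdet : (R * A * R).det = A.det * B.det⁻¹ := by
    rw [det_mul, det_mul, mul_right_comm, ← det_mul, hRR, det_nonsing_inv,
      Ring.inverse_eq_inv', mul_comm]
  have htr : (R * A * R).trace = (B⁻¹ * A).trace := by rw [trace_mul_cycle, hRR]
  have h := hP.log_det_le_trace_sub_card
  rw [hdet, Real.log_mul hA.det_pos.ne' (inv_pos.mpr hB.det_pos).ne', Real.log_inv, htr] at h
  rw [mul_sub, trace_sub, nonsing_inv_mul B hB.det_pos.ne'.isUnit, trace_one]
  linarith

lemma PosDef.abs_log_det_sub_log_det_le {A B : Matrix n n ℝ} (hA : A.PosDef) (hB : B.PosDef)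
    {c : ℝ} (hAc : ‖A⁻¹‖ ≤ c) (hBc : ‖B⁻¹‖ ≤ c) :
    |Real.log A.det - Real.log B.det| ≤ Fintype.card n * (c * ‖A - B‖) := by
  have key : ∀ {X Y : Matrix n n ℝ}, X.PosDef → Y.PosDef → ‖Y⁻¹‖ ≤ c →
      Real.log X.det - Real.log Y.det ≤ Fintype.card n * (c * ‖X - Y‖) := by
    intro X Y hX hY hYc
    calc Real.log X.det - Real.log Y.det ≤ (Y⁻¹ * (X - Y)).trace :=
          hX.log_det_sub_log_det_le_trace hY
      _ ≤ Fintype.card n * ‖Y⁻¹ * (X - Y)‖ :=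
          (le_abs_self _).trans (abs_trace_le_card_mul_l2_opNorm _)
      _ ≤ Fintype.card n * (c * ‖X - Y‖) := by
          gcongr
          exact (l2_opNorm_mul _ _).trans (by gcongr)
  refine abs_sub_le_iff.mpr ⟨key hA hB hBc, ?_⟩
  rw [norm_sub_rev]
  exact key hB hA hAc

lemma abs_trace_mul_inv_sub_trace_mul_inv_le {K A B : Matrix n n ℝ} (hA : IsUnit A)
    (hB : IsUnit B) {M c : ℝ} (hKM : ‖K‖ ≤ M) (hAc : ‖A⁻¹‖ ≤ c) (hBc : ‖B⁻¹‖ ≤ c) :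
    |(K * A⁻¹).trace - (K * B⁻¹).trace| ≤ Fintype.card n * (M * c * c * ‖A - B‖) := by
  have hM : 0 ≤ M := (norm_nonneg K).trans hKM
  have hc : 0 ≤ c := (norm_nonneg _).trans hAc
  rw [← trace_sub, ← mul_sub, inv_sub_inv_of_isUnit hA hB]
  refine (abs_trace_le_card_mul_l2_opNorm _).trans ?_
  gcongr
  calc ‖K * (A⁻¹ * (B - A) * B⁻¹)‖ ≤ ‖K‖ * (‖A⁻¹‖ * ‖B - A‖ * ‖B⁻¹‖) := by
        refine (l2_opNorm_mul _ _).trans ?_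
        gcongr
        exact (l2_opNorm_mul _ _).trans (by gcongr; exact l2_opNorm_mul _ _)
    _ ≤ M * (c * ‖A - B‖ * c) := by rw [norm_sub_rev]; gcongr
    _ = M * c * c * ‖A - B‖ := by ring

end Matrix

theorem kl_functional_lipschitz_general (m M : ℝ) (hm : 0 < m) :
    ∃ C : ℝ, ∀ (n : ℕ) (S St K : Matrix (Fin n) (Fin n) ℝ)
      (hS : S.PosDef) (hSt : St.PosDef) (hK : K.PosDef),
      (∀ i, m ≤ hS.1.eigenvalues i) → (∀ i, m ≤ hSt.1.eigenvalues i) →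
      (∀ i, m ≤ hK.1.eigenvalues i) →
      specNorm S ≤ M → specNorm St ≤ M → specNorm K ≤ M →
      |((1/(n:ℝ)) * Real.log (S * K⁻¹).det + (1/(n:ℝ)) * (K * S⁻¹).trace - 1) -
        ((1/(n:ℝ)) * Real.log (St * K⁻¹).det + (1/(n:ℝ)) * (K * St⁻¹).trace - 1)| ≤
        C * specNorm (S - St) := by
  refine ⟨m⁻¹ + M * m⁻¹ * m⁻¹, fun n S St K hS hSt hK hmS hmSt _ _ _ hMK => ?_⟩
  rw [specNorm_eq_l2_opNorm] at hMK ⊢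
  have hSi := hS.l2_opNorm_inv_le hm hmS
  have hSti := hSt.l2_opNorm_inv_le hm hmSt
  have hlog := hS.abs_log_det_sub_log_det_le hSt hSi hSti
  have htr := Matrix.abs_trace_mul_inv_sub_trace_mul_inv_le hS.isUnit hSt.isUnit hMK hSi hSti
  rw [Fintype.card_fin] at hlog htr
  have hM : 0 ≤ M := (norm_nonneg K).trans hMK
  have hKi : (K⁻¹).det ≠ 0 := hK.inv.det_pos.ne'
  simp only [Matrix.det_mul, Real.log_mul hS.det_pos.ne' hKi, Real.log_mul hSt.det_pos.ne' hKi]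
  calc _ = |1 / (n : ℝ) * (Real.log S.det - Real.log St.det)
          + 1 / (n : ℝ) * ((K * S⁻¹).trace - (K * St⁻¹).trace)| := by congr 1; ring
    _ ≤ m⁻¹ * ‖S - St‖ + M * m⁻¹ * m⁻¹ * ‖S - St‖ :=
        (abs_add_le _ _).trans <| add_le_add
          (abs_one_div_mul_le_of_abs_le_mul (by positivity) hlog)
          (abs_one_div_mul_le_of_abs_le_mul (by positivity) htr)
    _ = (m⁻¹ + M * m⁻¹ * m⁻¹) * ‖S - St‖ := by ring

/-- Lipschitz bound, with a constant depending only on `m` and `M` (not on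
`n`), for the scaled Kullback–Leibler functional
`d(Σ) = (1/n) log det(Σ K⁻¹) + (1/n) tr(K Σ⁻¹) − 1` in the matrix `Σ`, over symmetric
positive definite matrices with eigenvalues in `[m, M]`. -/
theorem kl_functional_lipschitz (m M : ℝ) (hm : 0 < m) (hmM : m ≤ M) :
    ∃ C : ℝ, ∀ (n : ℕ) (S St K : Matrix (Fin n) (Fin n) ℝ)
      (hS : S.PosDef) (hSt : St.PosDef) (hK : K.PosDef),
      (∀ i, m ≤ hS.1.eigenvalues i) → (∀ i, m ≤ hSt.1.eigenvalues i) →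
      (∀ i, m ≤ hK.1.eigenvalues i) →
      specNorm S ≤ M → specNorm St ≤ M → specNorm K ≤ M →
      |((1/(n:ℝ)) * Real.log (S * K⁻¹).det + (1/(n:ℝ)) * (K * S⁻¹).trace - 1) -
        ((1/(n:ℝ)) * Real.log (St * K⁻¹).det + (1/(n:ℝ)) * (K * St⁻¹).trace - 1)| ≤
        C * specNorm (S - St) :=
  kl_functional_lipschitz_general m M hm
end
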